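/- Let n ≥ 1 and let C ⊆ GF(4)ⁿ be an additive self-orthogonal code with |C| = 2^{n−k} such that the minimum Hamming weight of a nonzero vector of C⊥ equals d (so the corresponding [[n,k,d]] quantum code is pure), and suppose k = n − 2d + 2. Then one of the following holds: d = 1 and k = n; or d = 2, n is even, and k = n − 2; or (n,k,d) = (5,1,3); or (n,k,d) = (6,0,4). (A pure [[n, n−2d+2, d]] code has parameters [[n,n,1]], [[n,n−2,2]] with n even, [[5,1,3]], or [[6,0,4]].) -/

import Mathlib

noncomputable section

open Finset Polynomial

/-- The field `GF(4)` with four elements. -/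
abbrev F4 := GaloisField 2 2

/-- The trace inner product `u∗v = Σⱼ (uⱼ v̄ⱼ + ūⱼ vⱼ)` on `GF(4)ⁿ`,
where conjugation is `x̄ = x²`.  It takes values in the prime subfield. -/
def trIP {n : ℕ} (u v : Fin n → F4) : F4 :=
  ∑ j, (u j * (v j) ^ 2 + (u j) ^ 2 * v j)

/-- The Hamming weight of a vector in `GF(4)ⁿ`. -/
def wt {n : ℕ} (u : Fin n → F4) : ℕ := Set.ncard {j | u j ≠ 0}

/-- The dual of a code with respect to the trace inner product. -/
def trDual {n : ℕ} (C : Set (Fin n → F4)) : Set (Fin n → F4) :=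
  {u | ∀ v ∈ C, trIP u v = 0}

/- ---------------- Auxiliary lemmas ---------------- -/

noncomputable instance : Fintype F4 := Fintype.ofFinite _

lemma F4_card : Fintype.card F4 = 4 := by
  rw [← Nat.card_eq_fintype_card]
  simpa using GaloisField.card 2 2 (by norm_num)

lemma F4_pow4 (x : F4) : x ^ 4 = x := by
  have := FiniteField.pow_card x
  rwa [F4_card] at this

lemma F4_pow3 (x : F4) (hx : x ≠ 0) : x ^ 3 = 1 := by
  have := FiniteField.pow_card_sub_one_eq_one x hx
  rwa [F4_card] at this

/-- key scalar fact: if `a, b, a+b` are all nonzero then the trace term is 1. -/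
lemma term_unit (a b : F4) (ha : a ≠ 0) (hb : b ≠ 0) (hab : a ≠ b) :
    a * b ^ 2 + a ^ 2 * b = 1 := by
  have hbi : b * b⁻¹ = 1 := mul_inv_cancel₀ hb
  set t : F4 := a * b⁻¹ with ht
  have htb : t * b = a := by
    rw [ht, mul_assoc, inv_mul_cancel₀ hb, mul_one]
  have ht0 : t ≠ 0 := by
    intro h
    rw [h, zero_mul] at htb; exact ha htb.symm
  have ht1 : t ≠ 1 := by
    intro h
    rw [h, one_mul] at htb; exact hab htb.symm
  have ht3 : t ^ 3 = 1 := F4_pow3 t ht0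
  have hquad : t ^ 2 + t + 1 = 0 := by
    have hfac : (t - 1) * (t ^ 2 + t + 1) = t ^ 3 - 1 := by ring
    have : (t - 1) * (t ^ 2 + t + 1) = 0 := by rw [hfac, ht3, sub_self]
    rcases mul_eq_zero.mp this with h | h
    · exact absurd (sub_eq_zero.mp h) ht1
    · exact h
  have hb3 : b ^ 3 = 1 := F4_pow3 b hb
  have : a * b ^ 2 + a ^ 2 * b = (t + t ^ 2) * b ^ 3 := by
    rw [← htb]; ring
  rw [this, hb3, mul_one]
  have hneg : t ^ 2 + t = -1 := by linear_combination hquad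
  rw [show t + t ^ 2 = t ^ 2 + t by ring, hneg, CharTwo.neg_eq]

lemma exists_nondeg (c : F4) (hc : c ≠ 0) : ∃ x : F4, x * c ^ 2 + x ^ 2 * c ≠ 0 := by
  classical
  by_contra h
  push_neg at h
  have hall : ∀ x : F4, x = 0 ∨ x = c := by
    intro x
    have hx : x * c * (x + c) = 0 := by linear_combination h x
    rcases mul_eq_zero.mp hx with h1 | h1
    · rcases mul_eq_zero.mp h1 with h2 | h2
      · exact Or.inl h2
      · exact absurd h2 hc
    · right
      have : x = -c := by linear_combination h1
      rwa [CharTwo.neg_eq] at this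
  have hsub : (Finset.univ : Finset F4) ⊆ {0, c} := by
    intro x _
    rcases hall x with h | h <;> simp [h]
  have h2 : (Finset.univ : Finset F4).card ≤ 2 := by
    calc (Finset.univ : Finset F4).card ≤ ({0, c} : Finset F4).card := Finset.card_le_card hsub
    _ ≤ 2 := Finset.card_insert_le _ _ |>.trans (by simp)
  rw [Finset.card_univ, F4_card] at h2
  omega

lemma term_sq (a b : F4) : (a * b ^ 2 + a ^ 2 * b) ^ 2 = a * b ^ 2 + a ^ 2 * b := by
  rw [CharTwo.add_sq]
  have h1 : (a * b ^ 2) ^ 2 = a ^ 2 * b ^ 4 := by ring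
  have h2 : (a ^ 2 * b) ^ 2 = a ^ 4 * b ^ 2 := by ring
  rw [h1, h2, F4_pow4, F4_pow4, add_comm]

lemma trIP_sq {n : ℕ} (u v : Fin n → F4) : (trIP u v) ^ 2 = trIP u v := by
  unfold trIP
  rw [CharTwo.sum_sq]
  exact Finset.sum_congr rfl fun j _ => term_sq _ _

lemma trIP_zero_or_one {n : ℕ} (u v : Fin n → F4) : trIP u v = 0 ∨ trIP u v = 1 := by
  have h := trIP_sq u v
  have : trIP u v * (trIP u v - 1) = 0 := by linear_combination h
  rcases mul_eq_zero.mp this with h1 | h1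
  · exact Or.inl h1
  · exact Or.inr (by linear_combination h1)

lemma trIP_add_right {n : ℕ} (u v w : Fin n → F4) :
    trIP u (v + w) = trIP u v + trIP u w := by
  unfold trIP
  rw [← Finset.sum_add_distrib]
  refine Finset.sum_congr rfl fun j _ => ?_
  simp only [Pi.add_apply]
  rw [CharTwo.add_sq]
  ring

lemma trIP_add_left {n : ℕ} (u v w : Fin n → F4) :
    trIP (u + v) w = trIP u w + trIP v w := by
  unfold trIP
  rw [← Finset.sum_add_distrib]
  refine Finset.sum_congr rfl fun j _ => ?_
  simp only [Pi.add_apply]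
  rw [CharTwo.add_sq]
  ring

lemma trIP_zero_right {n : ℕ} (u : Fin n → F4) : trIP u 0 = 0 := by
  unfold trIP; simp

lemma trIP_zero_left {n : ℕ} (v : Fin n → F4) : trIP 0 v = 0 := by
  unfold trIP; simp

/-- a nonzero additive functional with values in `{0,1}` vanishes on exactly half. -/
lemma half_card {A : Type*} [AddCommGroup A] [Fintype A] (f : A →+ F4)
    [DecidablePred fun a : A => f a = 0]
    (hsq : ∀ a, (f a) ^ 2 = f a) (a₀ : A) (ha₀ : f a₀ ≠ 0) :
    Fintype.card A = 2 * (Finset.univ.filter (fun a => f a = 0)).card := by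
  classical
  have hker : (Finset.univ.filter (fun a => f a = 0)).card = Nat.card f.ker := by
    rw [Nat.card_eq_fintype_card, ← Fintype.card_subtype]
    apply Fintype.card_congr
    exact Equiv.subtypeEquivRight (fun a => by simp [AddMonoidHom.mem_ker])
  have h1 : Nat.card A = Nat.card (A ⧸ f.ker) * Nat.card f.ker :=
    AddSubgroup.card_eq_card_quotient_mul_card_addSubgroup _
  have h2 : Nat.card (A ⧸ f.ker) = Nat.card f.range :=
    Nat.card_congr (QuotientAddGroup.quotientKerEquivRange f).toEquiv
  have hone : f a₀ = 1 := by
    have := hsq a₀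
    have h' : f a₀ * (f a₀ - 1) = 0 := by linear_combination this
    rcases mul_eq_zero.mp h' with h1 | h1
    · exact absurd h1 ha₀
    · linear_combination h1
  have h3 : (f.range : Set F4) = {0, 1} := by
    ext x
    simp only [Set.mem_insert_iff, Set.mem_singleton_iff, SetLike.mem_coe,
      AddMonoidHom.mem_range]
    constructor
    · rintro ⟨a, rfl⟩
      have h' : f a * (f a - 1) = 0 := by linear_combination hsq a
      rcases mul_eq_zero.mp h' with h1 | h1
      · exact Or.inl h1
      · exact Or.inr (by linear_combination h1)
    · rintro (rfl | rfl)
      · exact ⟨0, map_zero f⟩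
      · exact ⟨a₀, hone⟩
  have h4 : Nat.card f.range = 2 := by
    have : Nat.card f.range = Nat.card ((f.range : Set F4)) := rfl
    rw [this, h3, Nat.card_coe_set_eq, Set.ncard_pair (zero_ne_one)]
  rw [← Nat.card_eq_fintype_card, h1, h2, h4, hker]

/-- The main counting lemma: purity forces a precise count of
codewords vanishing on a small set of coordinates. -/
lemma count_main {n d : ℕ} (C : AddSubgroup (Fin n → F4))
    (hpure : ∀ v ∈ trDual (C : Set (Fin n → F4)), v ≠ 0 → d ≤ wt v)
    (S : Finset (Fin n)) (hS : S.card < d) :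
    Nat.card C = 4 ^ S.card *
      Nat.card {c : C // ∀ j ∈ S, (c : Fin n → F4) j = 0} := by
  classical
  set Y : AddSubgroup (Fin n → F4) :=
    { carrier := {y | ∀ j, j ∉ S → y j = 0}
      add_mem' := fun ha hb j hj => by
        simp only [Pi.add_apply]
        rw [ha j hj, hb j hj, add_zero]
      zero_mem' := fun j hj => rfl
      neg_mem' := fun ha j hj => by
        simp only [Pi.neg_apply]
        rw [ha j hj, neg_zero] } with hYdef
  have memY : ∀ v : Fin n → F4, v ∈ Y ↔ ∀ j, j ∉ S → v j = 0 := fun v => Iff.rfl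
  haveI : Fintype C := Fintype.ofFinite _
  haveI : Fintype Y := Fintype.ofFinite _
  -- cardinality of Y
  have cardY : Fintype.card Y = 4 ^ S.card := by
    have e : Y ≃ (S → F4) :=
      { toFun := fun y j => (y : Fin n → F4) j.1
        invFun := fun z => ⟨fun j => if h : j ∈ S then z ⟨j, h⟩ else 0,
          fun j hj => dif_neg hj⟩
        left_inv := by
          intro y
          ext j
          by_cases h : j ∈ S
          · simp [h]
          · simp [h, y.2 j h]
        right_inv := by
          intro z
          ext j
          simp [j.2] }
    rw [Fintype.card_congr e, Fintype.card_fun, F4_card, Fintype.card_coe]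
  -- row evaluation
  have row : ∀ y : Y,
      2 * ∑ c : C, (if trIP (y : Fin n → F4) (c : Fin n → F4) = 0 then 1 else 0)
        = Fintype.card C + (if y = (0 : Y) then Fintype.card C else 0) := by
    intro y
    by_cases hy : y = (0 : Y)
    · subst hy
      have hone : ∀ c : C,
          (if trIP ((0 : Y) : Fin n → F4) (c : Fin n → F4) = 0 then (1:ℕ) else 0) = 1 := by
        intro c
        have hz : trIP ((0 : Y) : Fin n → F4) (c : Fin n → F4) = 0 := by
          rw [ZeroMemClass.coe_zero]
          exact trIP_zero_left _
        rw [if_pos hz]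
      rw [Finset.sum_congr rfl fun c _ => hone c, Finset.sum_const,
        Finset.card_univ, smul_eq_mul, mul_one, if_pos rfl]
      omega
    · rw [if_neg hy, add_zero]
      set f : C →+ F4 := AddMonoidHom.mk'
        (fun c : C => trIP (y : Fin n → F4) (c : Fin n → F4))
        (by
          intro c c'
          push_cast
          exact trIP_add_right _ _ _) with hf
      have hynz : (y : Fin n → F4) ≠ 0 := by
        intro h
        exact hy (Subtype.ext h)
      have hex : ∃ c : C, f c ≠ 0 := by
        by_contra hc
        push_neg at hc
        have hdual : (y : Fin n → F4) ∈ trDual (C : Set (Fin n → F4)) := by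
          intro v hv
          exact hc ⟨v, hv⟩
        have hwt : wt (y : Fin n → F4) ≤ S.card := by
          have hsub : {j | (y : Fin n → F4) j ≠ 0} ⊆ (S : Set (Fin n)) := by
            intro j hj
            by_contra hjS
            exact hj (y.2 j hjS)
          calc wt (y : Fin n → F4) ≤ (S : Set (Fin n)).ncard :=
                Set.ncard_le_ncard hsub (S.finite_toSet)
          _ = S.card := Set.ncard_coe_finset S
        have := hpure _ hdual hynz
        omega
      obtain ⟨c₀, hc₀⟩ := hex
      have hhalf := half_card f (fun c => trIP_sq _ _) c₀ hc₀
      rw [Finset.card_filter] at hhalf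
      exact hhalf.symm
  -- column evaluation
  have col : ∀ c : C,
      2 * ∑ y : Y, (if trIP (y : Fin n → F4) (c : Fin n → F4) = 0 then 1 else 0)
        = Fintype.card Y +
          (if (∀ j ∈ S, (c : Fin n → F4) j = 0) then Fintype.card Y else 0) := by
    intro c
    by_cases hc : ∀ j ∈ S, (c : Fin n → F4) j = 0
    · rw [if_pos hc]
      have hz : ∀ y : Y, trIP (y : Fin n → F4) (c : Fin n → F4) = 0 := by
        intro y
        unfold trIP
        apply Finset.sum_eq_zero
        intro j _
        by_cases hj : j ∈ S
        · rw [hc j hj]; ring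
        · rw [y.2 j hj]; ring
      have hone : ∀ y : Y,
          (if trIP (y : Fin n → F4) (c : Fin n → F4) = 0 then (1:ℕ) else 0) = 1 :=
        fun y => if_pos (hz y)
      rw [Finset.sum_congr rfl fun y _ => hone y, Finset.sum_const,
        Finset.card_univ, smul_eq_mul, mul_one]
      omega
    · rw [if_neg hc, add_zero]
      push_neg at hc
      obtain ⟨j₀, hj₀S, hj₀⟩ := hc
      obtain ⟨x, hx⟩ := exists_nondeg _ hj₀
      set f : Y →+ F4 := AddMonoidHom.mk'
        (fun y : Y => trIP (y : Fin n → F4) (c : Fin n → F4))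
        (by
          intro y y'
          push_cast
          exact trIP_add_left _ _ _) with hf
      have hmem : (Pi.single j₀ x : Fin n → F4) ∈ Y := by
        intro j hj
        have hne : j ≠ j₀ := fun h => hj (h ▸ hj₀S)
        exact Pi.single_eq_of_ne (M := fun _ => F4) hne x
      have htr : trIP (Pi.single j₀ x) (c : Fin n → F4)
          = x * ((c : Fin n → F4) j₀) ^ 2 + x ^ 2 * ((c : Fin n → F4) j₀) := by
        unfold trIP
        rw [Finset.sum_eq_single j₀]
        · have hsame : (Pi.single j₀ x : Fin n → F4) j₀ = x :=
            Pi.single_eq_same (M := fun _ => F4) j₀ x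
          rw [hsame]
        · intro j _ hj
          have hz : (Pi.single j₀ x : Fin n → F4) j = 0 :=
            Pi.single_eq_of_ne (M := fun _ => F4) hj x
          rw [hz]
          ring
        · intro h
          exact absurd (Finset.mem_univ j₀) h
      have hfy : f ⟨Pi.single j₀ x, hmem⟩ ≠ 0 := by
        show trIP (Pi.single j₀ x) (c : Fin n → F4) ≠ 0
        rw [htr]
        exact hx
      have hhalf := half_card f (fun y => trIP_sq _ _) _ hfy
      rw [Finset.card_filter] at hhalf
      exact hhalf.symm
  -- double counting
  have hswap : ∑ y : Y, ∑ c : C,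
        (if trIP (y : Fin n → F4) (c : Fin n → F4) = 0 then 1 else 0)
      = ∑ c : C, ∑ y : Y,
        (if trIP (y : Fin n → F4) (c : Fin n → F4) = 0 then 1 else 0) :=
    Finset.sum_comm
  have hrows : 2 * ∑ y : Y, ∑ c : C,
        (if trIP (y : Fin n → F4) (c : Fin n → F4) = 0 then 1 else 0)
      = Fintype.card Y * Fintype.card C + Fintype.card C := by
    rw [Finset.mul_sum]
    rw [Finset.sum_congr rfl (fun y _ => row y)]
    rw [Finset.sum_add_distrib, Finset.sum_const, Finset.card_univ, smul_eq_mul]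
    congr 1
    exact (Finset.sum_ite_eq' Finset.univ (0 : Y) (fun _ => Fintype.card C)).trans
      (if_pos (Finset.mem_univ _))
  have hcols : 2 * ∑ c : C, ∑ y : Y,
        (if trIP (y : Fin n → F4) (c : Fin n → F4) = 0 then 1 else 0)
      = Fintype.card C * Fintype.card Y +
        (Finset.univ.filter
          (fun c : C => ∀ j ∈ S, (c : Fin n → F4) j = 0)).card * Fintype.card Y := by
    rw [Finset.mul_sum]
    rw [Finset.sum_congr rfl (fun c _ => col c)]
    rw [Finset.sum_add_distrib, Finset.sum_const, Finset.card_univ, smul_eq_mul]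
    congr 1
    rw [← Finset.sum_filter, Finset.sum_const, smul_eq_mul]
  have hKcard : (Finset.univ.filter
      (fun c : C => ∀ j ∈ S, (c : Fin n → F4) j = 0)).card
      = Nat.card {c : C // ∀ j ∈ S, (c : Fin n → F4) j = 0} := by
    rw [Nat.card_eq_fintype_card, Fintype.card_subtype]
  have key : Fintype.card C = Fintype.card Y *
      Nat.card {c : C // ∀ j ∈ S, (c : Fin n → F4) j = 0} := by
    have h' : Fintype.card Y * Fintype.card C + Fintype.card C
        = Fintype.card C * Fintype.card Y +
          (Finset.univ.filter
            (fun c : C => ∀ j ∈ S, (c : Fin n → F4) j = 0)).card * Fintype.card Y := by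
      rw [← hrows, ← hcols, hswap]
    rw [hKcard, Nat.mul_comm (Fintype.card Y) (Fintype.card C)] at h'
    have h'' := Nat.add_left_cancel h'
    rw [h'', Nat.mul_comm]
  rw [Nat.card_eq_fintype_card, key, cardY]

/-- Parity lemma: two codewords vanishing exactly on `T` with distinct values
off `T` force `n - T.card` to be even. -/
lemma parity_aux {n : ℕ} (T : Finset (Fin n)) (a b : Fin n → F4)
    (hT : ∀ j ∈ T, a j = 0)
    (hoff : ∀ j ∉ T, a j ≠ 0 ∧ b j ≠ 0 ∧ a j ≠ b j)
    (h0 : trIP a b = 0) : 2 ∣ (n - T.card) := by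
  classical
  have hterm : ∀ j, a j * (b j) ^ 2 + (a j) ^ 2 * b j
      = if j ∈ T then 0 else 1 := by
    intro j
    by_cases h : j ∈ T
    · rw [if_pos h, hT j h]; ring
    · rw [if_neg h]
      obtain ⟨h1, h2, h3⟩ := hoff j h
      exact term_unit _ _ h1 h2 h3
  have hsum : trIP a b = ((n - T.card : ℕ) : F4) := by
    unfold trIP
    rw [Finset.sum_congr rfl (fun j _ => hterm j)]
    rw [Finset.sum_ite, Finset.sum_const_zero, Finset.sum_const, zero_add]
    rw [Finset.filter_not, Finset.filter_mem_eq_inter, Finset.univ_inter]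
    rw [Finset.card_sdiff_of_subset (Finset.subset_univ _), Finset.card_univ, Fintype.card_fin]
    rw [nsmul_eq_mul, mul_one]
  rw [h0] at hsum
  exact (CharP.cast_eq_zero_iff F4 2 _).mp hsum.symm

/-- From a finite type of cardinality `> 2` with a distinguished element `z`,
extract two further distinct elements. -/
lemma exists_two {A : Type*} [Fintype A] (z : A) (h : 2 < Fintype.card A) :
    ∃ a b : A, a ≠ z ∧ b ≠ z ∧ a ≠ b := by
  classical
  obtain ⟨a, ha⟩ := Fintype.exists_ne_of_one_lt_card (by omega) z
  have hne : ((Finset.univ : Finset A) \ {z, a}).Nonempty := by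
    rw [← Finset.card_pos, Finset.card_sdiff_of_subset (Finset.subset_univ _)]
    have h2 : ({z, a} : Finset A).card ≤ 2 :=
      (Finset.card_insert_le _ _).trans (by simp)
    rw [Finset.card_univ]
    omega
  obtain ⟨b, hb⟩ := hne
  rw [Finset.mem_sdiff, Finset.mem_insert, Finset.mem_singleton] at hb
  push_neg at hb
  exact ⟨b, a, hb.2.1, ha, hb.2.2⟩

/-- Classification of pure [[n, n-2d+2, d]] codes: the parameters must be
[[n,n,1]], [[n,n-2,2]] with n even, [[5,1,3]], or [[6,0,4]]. -/
theorem pure_mds_classification (n k d : ℕ) (hn : 1 ≤ n) (hk : k ≤ n)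
    (C : AddSubgroup (Fin n → F4))
    (hso : (C : Set (Fin n → F4)) ⊆ trDual (C : Set (Fin n → F4)))
    (hcard : Nat.card C = 2 ^ (n - k))
    (hpure : ∀ v ∈ trDual (C : Set (Fin n → F4)), v ≠ 0 → d ≤ wt v)
    (hmin : ∃ v ∈ trDual (C : Set (Fin n → F4)), v ≠ 0 ∧ wt v = d)
    (hkd : (k : ℤ) = (n : ℤ) - 2 * d + 2) :
    (d = 1 ∧ k = n) ∨ (d = 2 ∧ Even n ∧ (k : ℤ) = (n : ℤ) - 2) ∨
      (n = 5 ∧ k = 1 ∧ d = 3) ∨ (n = 6 ∧ k = 0 ∧ d = 4) := by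
  classical
  have hd1 : 1 ≤ d := by omega
  have hnk : n - k = 2 * (d - 1) := by omega
  have hC4 : Nat.card C = 4 ^ (d - 1) := by
    rw [hcard, hnk, pow_mul]
    norm_num
  haveI : Fintype C := Fintype.ofFinite _
  have hCcard : Fintype.card C = 4 ^ (d - 1) := by
    rw [← Nat.card_eq_fintype_card, hC4]
  -- the "vanishing" lemma: a codeword vanishing on d-1 coordinates is zero
  have vanish : ∀ S : Finset (Fin n), S.card = d - 1 →
      ∀ c : Fin n → F4, c ∈ C → (∀ j ∈ S, c j = 0) → c = 0 := by
    intro S hScard c hc hvan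
    have h := count_main C hpure S (by omega)
    rw [hC4, hScard] at h
    have hK : Nat.card {x : C // ∀ j ∈ S, (x : Fin n → F4) j = 0} = 1 := by
      have h4 : (0 : ℕ) < 4 ^ (d - 1) := pow_pos (by norm_num) _
      have hmul : 4 ^ (d - 1) * 1
          = 4 ^ (d - 1) * Nat.card {x : C // ∀ j ∈ S, (x : Fin n → F4) j = 0} := by
        rw [mul_one]
        exact h
      exact (Nat.eq_of_mul_eq_mul_left h4 hmul).symm
    have hsub := (Nat.card_eq_one_iff_unique.mp hK).1
    have heq : (⟨⟨c, hc⟩, hvan⟩ : {x : C // ∀ j ∈ S, (x : Fin n → F4) j = 0})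
        = ⟨⟨0, C.zero_mem⟩, fun j _ => rfl⟩ := Subsingleton.elim _ _
    have h1 : (⟨c, hc⟩ : C) = ⟨0, C.zero_mem⟩ := Subtype.ext_iff.mp heq
    exact Subtype.ext_iff.mp h1
  -- counting subgroups vanishing on a set
  have countK : ∀ S : Finset (Fin n), S.card < d →
      (Finset.univ.filter
        (fun c : C => ∀ j ∈ S, (c : Fin n → F4) j = 0)).card
        = 4 ^ (d - 1 - S.card) := by
    intro S hS
    have h := count_main C hpure S hS
    rw [hC4] at h
    have hfil : (Finset.univ.filter
        (fun c : C => ∀ j ∈ S, (c : Fin n → F4) j = 0)).card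
        = Nat.card {c : C // ∀ j ∈ S, (c : Fin n → F4) j = 0} := by
      rw [Nat.card_eq_fintype_card, Fintype.card_subtype]
    rw [hfil]
    have hpow : (4 : ℕ) ^ (d - 1) = 4 ^ S.card * 4 ^ (d - 1 - S.card) := by
      rw [← pow_add]
      congr 1
      omega
    rw [hpow] at h
    have h4 : (0 : ℕ) < 4 ^ S.card := pow_pos (by norm_num) _
    exact (Nat.eq_of_mul_eq_mul_left h4 h.symm)
  -- Case d = 1
  by_cases hd_eq1 : d = 1
  · left
    exact ⟨hd_eq1, by omega⟩
  -- Case d = 2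
  by_cases hd_eq2 : d = 2
  · right; left
    refine ⟨hd_eq2, ?_, by omega⟩
    subst hd_eq2
    -- C has 4 elements
    have hC4' : Fintype.card C = 4 := by rw [hCcard]; norm_num
    obtain ⟨a, b, ha0, hb0, hab⟩ := exists_two (0 : C) (by omega)
    have hA : (a : Fin n → F4) ∈ trDual (C : Set (Fin n → F4)) := hso a.2
    have h0 : trIP (a : Fin n → F4) (b : Fin n → F4) = 0 := hA _ b.2
    have hoff : ∀ j ∉ (∅ : Finset (Fin n)),
        (a : Fin n → F4) j ≠ 0 ∧ (b : Fin n → F4) j ≠ 0 ∧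
        (a : Fin n → F4) j ≠ (b : Fin n → F4) j := by
      intro j _
      have hvj : ∀ c : C, c ≠ 0 → (c : Fin n → F4) j ≠ 0 := by
        intro c hc hcj
        apply hc
        apply Subtype.ext
        exact vanish {j} (by simp) _ c.2 (by simpa using hcj)
      refine ⟨hvj a ha0, hvj b hb0, ?_⟩
      intro hj
      apply hab
      have hd : (a - b : C) = 0 := by
        apply Subtype.ext
        apply vanish {j} (by simp) _ (a - b : C).2
        intro j' hj'
        simp only [Finset.mem_singleton] at hj'
        subst hj'
        push_cast
        rw [Pi.sub_apply, hj, sub_self]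
      have := sub_eq_zero.mp hd
      exact this
    have hdvd := parity_aux ∅ (a : Fin n → F4) (b : Fin n → F4)
      (fun j hj => absurd hj (Finset.notMem_empty j)) hoff h0
    simp only [Finset.card_empty, Nat.sub_zero] at hdvd
    exact even_iff_two_dvd.mpr hdvd
  -- now d ≥ 3
  have hd3 : 3 ≤ d := by omega
  have hnge : n + 2 = k + 2 * d := by omega
  -- key bound : n ≤ d + 2
  have hnle : n ≤ d + 2 := by
    by_contra hcon
    push_neg at hcon
    -- choose T of size d - 3
    obtain ⟨T, -, hTcard⟩ := Finset.exists_subset_card_eq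
      (s := (Finset.univ : Finset (Fin n))) (n := d - 3)
      (by rw [Finset.card_univ, Fintype.card_fin]; omega)
    -- the subgroup of codewords vanishing on T minus zero
    set Dall : Finset C := Finset.univ.filter
      (fun c : C => (∀ j ∈ T, (c : Fin n → F4) j = 0) ∧ c ≠ 0) with hDall
    have hDallcard : Dall.card = 15 := by
      have h16 := countK T (by omega)
      rw [hTcard] at h16
      have h2 : d - 1 - (d - 3) = 2 := by omega
      rw [h2] at h16
      have : Dall = (Finset.univ.filter
          (fun c : C => ∀ j ∈ T, (c : Fin n → F4) j = 0)).erase 0 := by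
        ext c
        simp only [hDall, Finset.mem_filter, Finset.mem_erase, Finset.mem_univ,
          true_and]
        tauto
      rw [this, Finset.card_erase_of_mem (by
        simp only [Finset.mem_filter, Finset.mem_univ, true_and]
        intro j _
        rfl), h16]
      norm_num
    -- the sets E j
    set E : Fin n → Finset C := fun j => Finset.univ.filter
      (fun c : C => (∀ t ∈ insert j T, (c : Fin n → F4) t = 0) ∧ c ≠ 0) with hE
    have hEcard : ∀ j ∈ Finset.univ \ T, (E j).card = 3 := by
      intro j hj
      rw [Finset.mem_sdiff] at hj
      have hjT : j ∉ T := hj.2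
      have hins : (insert j T).card = d - 2 := by
        rw [Finset.card_insert_of_notMem hjT, hTcard]; omega
      have h4 := countK (insert j T) (by omega)
      rw [hins] at h4
      have h2 : d - 1 - (d - 2) = 1 := by omega
      rw [h2, pow_one] at h4
      have : E j = (Finset.univ.filter
          (fun c : C => ∀ t ∈ insert j T, (c : Fin n → F4) t = 0)).erase 0 := by
        ext c
        simp only [hE, Finset.mem_filter, Finset.mem_erase, Finset.mem_univ,
          true_and]
        tauto
      rw [this, Finset.card_erase_of_mem (by
        simp only [Finset.mem_filter, Finset.mem_univ, true_and]
        intro t _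
        rfl), h4]
    -- pairwise disjoint
    have hdisj : ∀ j ∈ Finset.univ \ T, ∀ j' ∈ Finset.univ \ T, j ≠ j' →
        Disjoint (E j) (E j') := by
      intro j hj j' hj' hne
      rw [Finset.mem_sdiff] at hj hj'
      rw [Finset.disjoint_left]
      intro c hc hc'
      simp only [hE, Finset.mem_filter, Finset.mem_univ, true_and] at hc hc'
      have hScard : (insert j (insert j' T)).card = d - 1 := by
        rw [Finset.card_insert_of_notMem (by
          simp only [Finset.mem_insert]
          push_neg
          exact ⟨hne, hj.2⟩)]
        rw [Finset.card_insert_of_notMem hj'.2, hTcard]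
        omega
      have : (c : Fin n → F4) = 0 := by
        apply vanish _ hScard _ c.2
        intro t ht
        simp only [Finset.mem_insert] at ht
        rcases ht with rfl | rfl | ht
        · exact hc.1 t (Finset.mem_insert_self _ _)
        · exact hc'.1 t (Finset.mem_insert_self _ _)
        · exact hc.1 t (Finset.mem_insert_of_mem ht)
      exact hc.2 (Subtype.ext this)
    -- union bound
    have hsubset : (Finset.univ \ T).biUnion E ⊆ Dall := by
      intro c hc
      rw [Finset.mem_biUnion] at hc
      obtain ⟨j, hj, hcj⟩ := hc
      simp only [hE, Finset.mem_filter, Finset.mem_univ, true_and] at hcj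
      simp only [hDall, Finset.mem_filter, Finset.mem_univ, true_and]
      exact ⟨fun t ht => hcj.1 t (Finset.mem_insert_of_mem ht), hcj.2⟩
    have hbUcard : ((Finset.univ \ T).biUnion E).card = 3 * (n - (d - 3)) := by
      rw [Finset.card_biUnion hdisj]
      rw [Finset.sum_congr rfl hEcard]
      rw [Finset.sum_const, smul_eq_mul]
      rw [Finset.card_sdiff_of_subset (Finset.subset_univ _), Finset.card_univ,
        Fintype.card_fin, hTcard]
      ring
    have hle := Finset.card_le_card hsubset
    rw [hbUcard, hDallcard] at hle
    omega
  -- d ≤ 4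
  have hd4 : d ≤ 4 := by omega
  rcases (by omega : d = 3 ∨ d = 4) with hd | hd
  · -- d = 3: show n = 5 via parity
    subst hd
    -- n ∈ {4, 5}
    have hn45 : n = 4 ∨ n = 5 := by omega
    -- the parity argument rules out n even
    have hodd : ¬ (2 ∣ n - 1) → False := by
      intro h; exact h (by
        -- we show 2 ∣ n - 1 always
        -- pick coordinate j₀
        have hn0 : 0 < n := by omega
        set j₀ : Fin n := ⟨0, hn0⟩ with hj₀
        -- subtype of codewords vanishing at j₀
        have hDcard : (Finset.univ.filter
            (fun c : C => ∀ j ∈ ({j₀} : Finset (Fin n)),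
              (c : Fin n → F4) j = 0)).card = 4 := by
          have := countK {j₀} (by simp)
          simpa using this
        set Dfin : Finset C := Finset.univ.filter
          (fun c : C => ∀ j ∈ ({j₀} : Finset (Fin n)), (c : Fin n → F4) j = 0)
          with hDfin
        haveI : Fintype {c : C // c ∈ Dfin} := inferInstance
        have hDtype : Fintype.card {c : C // c ∈ Dfin} = 4 := by
          rw [Fintype.card_coe, hDcard]
        have h0mem : (0 : C) ∈ Dfin := by
          simp only [hDfin, Finset.mem_filter, Finset.mem_univ, true_and]
          intro j _
          rfl
        obtain ⟨a, b, ha0, hb0, hab⟩ := exists_two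
          (⟨0, h0mem⟩ : {c : C // c ∈ Dfin}) (by omega)
        have hmemD : ∀ c : C, c ∈ Dfin → (c : Fin n → F4) j₀ = 0 := by
          intro c hcD
          simp only [hDfin, Finset.mem_filter, Finset.mem_univ, true_and] at hcD
          exact hcD j₀ (Finset.mem_singleton_self j₀)
        have haj0 : ((a : C) : Fin n → F4) j₀ = 0 := hmemD _ a.2
        have hbj0 : ((b : C) : Fin n → F4) j₀ = 0 := hmemD _ b.2
        have ha0' : (a : C) ≠ 0 := fun h => ha0 (Subtype.ext h)
        have hb0' : (b : C) ≠ 0 := fun h => hb0 (Subtype.ext h)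
        have hab' : (a : C) ≠ (b : C) := fun h => hab (Subtype.ext h)
        -- nonvanishing off T = {j₀}
        have hvj : ∀ c : C, (c : Fin n → F4) j₀ = 0 → c ≠ 0 → ∀ j, j ≠ j₀ →
            (c : Fin n → F4) j ≠ 0 := by
          intro c hcj0 hc j hjne hcj
          apply hc
          apply Subtype.ext
          apply vanish ({j₀, j}) (by
            rw [Finset.card_insert_of_notMem (by simpa using hjne.symm)]
            simp) _ c.2
          intro t ht
          rcases Finset.mem_insert.mp ht with h | h
          · rw [h]; exact hcj0
          · rw [Finset.mem_singleton] at h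
            rw [h]; exact hcj
        have hoff : ∀ j ∉ ({j₀} : Finset (Fin n)),
            ((a : C) : Fin n → F4) j ≠ 0 ∧ ((b : C) : Fin n → F4) j ≠ 0 ∧
            ((a : C) : Fin n → F4) j ≠ ((b : C) : Fin n → F4) j := by
          intro j hj
          rw [Finset.mem_singleton] at hj
          refine ⟨hvj _ haj0 ha0' j hj, hvj _ hbj0 hb0' j hj, ?_⟩
          intro heq
          apply hab'
          by_contra hne
          have hzne : ((a : C) - (b : C)) ≠ 0 := fun h => hne (sub_eq_zero.mp h)
          have hsubj0 : (((a : C) - (b : C) : C) : Fin n → F4) j₀ = 0 := by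
            push_cast
            rw [Pi.sub_apply, haj0, hbj0, sub_self]
          have := hvj _ hsubj0 hzne j hj
          apply this
          push_cast
          rw [Pi.sub_apply, heq, sub_self]
        have hT : ∀ j ∈ ({j₀} : Finset (Fin n)), ((a : C) : Fin n → F4) j = 0 := by
          intro j hj
          rw [Finset.mem_singleton] at hj
          rw [hj]
          exact haj0
        have hA : ((a : C) : Fin n → F4) ∈ trDual (C : Set (Fin n → F4)) :=
          hso (a : C).2
        have h0 : trIP ((a : C) : Fin n → F4) ((b : C) : Fin n → F4) = 0 :=
          hA _ (b : C).2
        have := parity_aux {j₀} _ _ hT hoff h0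
        simpa using this)
    have h2n1 : 2 ∣ n - 1 := by
      by_contra h
      exact hodd h
    have hn5 : n = 5 := by
      rcases hn45 with h | h
      · subst h; omega
      · exact h
    right; right; left
    exact ⟨hn5, by omega, rfl⟩
  · -- d = 4
    subst hd
    right; right; right
    exact ⟨by omega, by omega, rfl⟩
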